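/- With f and f* as in the counterexample, the joint survival functions satisfy P(X_1≥z_1, X_2≥z_2, Y_1≥z_3, Y_2≥z_4) ≤ P(X*_1≥z_1, X*_2≥z_2, Y*_1≥z_3, Y*_2≥z_4) for all z ∈ ℝ⁴. -/

import Mathlib

open MeasureTheory

noncomputable def ind (P : Prop) : ℝ := by classical exact if P then 1 else 0

noncomputable def fdens (x₁ x₂ y₁ y₂ : ℝ) : ℝ :=
  ind (0 ≤ x₁ ∧ x₁ ≤ x₂ ∧ x₂ ≤ 1) * ind (1 < y₁ ∧ y₁ ≤ y₂ ∧ y₂ ≤ 2) +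
  ind (0 ≤ x₂ ∧ x₂ < x₁ ∧ x₁ ≤ 1) * ind (1 < y₂ ∧ y₂ < y₁ ∧ y₁ ≤ 2) +
  ind (1 < x₁ ∧ x₁ ≤ x₂ ∧ x₂ ≤ 2) * ind (0 ≤ y₁ ∧ y₁ ≤ y₂ ∧ y₂ ≤ 1) +
  ind (1 < x₂ ∧ x₂ < x₁ ∧ x₁ ≤ 2) * ind (0 ≤ y₂ ∧ y₂ < y₁ ∧ y₁ ≤ 1)

noncomputable def fstar (x₁ x₂ y₁ y₂ : ℝ) : ℝ :=
  ind (0 ≤ x₁ ∧ x₁ ≤ x₂ ∧ x₂ ≤ 1) * ind (0 ≤ y₂ ∧ y₂ < y₁ ∧ y₁ ≤ 1) +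
  ind (0 ≤ x₂ ∧ x₂ < x₁ ∧ x₁ ≤ 1) * ind (1 < y₂ ∧ y₂ < y₁ ∧ y₁ ≤ 2) +
  ind (1 < x₁ ∧ x₁ ≤ x₂ ∧ x₂ ≤ 2) * ind (0 ≤ y₁ ∧ y₁ ≤ y₂ ∧ y₂ ≤ 1) +
  ind (1 < x₂ ∧ x₂ < x₁ ∧ x₁ ≤ 2) * ind (1 < y₁ ∧ y₁ ≤ y₂ ∧ y₂ ≤ 2)

/-!
Both densities are sums of indicators of products `T × T'` of the triangles `triA`, `triB`,
`triC`, `triD` below. They share the blocks `triB × triD` and `triC × triA`; `fdens` has in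
addition `triA × triC + triD × triB` and `fstar` has `triA × triB + triD × triC`. So if `a, d` are
the areas of `triA, triD` inside the orthant `[z₁, ∞) × [z₂, ∞)` and `b, c` those of `triB, triC`
inside `[z₃, ∞) × [z₄, ∞)`, the two survival functions differ by `(d - a) (c - b)`.
All four triangles have area `1/2`, and `triA, triB` lie below `(1, 1)` while `triC, triD` lie
above it; an orthant that meets `triA` (resp. `triB`) therefore contains all of `triD`
(resp. `triC`), whence `a ≤ d` and `b ≤ c`.
-/

open Set ENNReal

lemma mul_add_mul_le_mul_add_mul_of_canonical {R : Type*} [CommSemiring R] [Preorder R]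
    [CanonicallyOrderedAdd R] {a b c d : R} (hab : a ≤ b) (hcd : c ≤ d) :
    a * d + b * c ≤ a * c + b * d := by
  obtain ⟨e, rfl⟩ := exists_add_of_le hab
  obtain ⟨f, rfl⟩ := exists_add_of_le hcd
  calc a * (c + f) + (a + e) * c = a * c + (a + e) * c + a * f := by ring
    _ ≤ a * c + (a + e) * c + a * f + e * f := le_self_add
    _ = a * c + (a + e) * (c + f) := by ring

lemma measure_Ici_inter_le_measure_Ici_inter {α : Type*} [MeasurableSpace α] [Preorder α]
    {μ : Measure α} {s t : Set α} {c : α} (hs : s ⊆ Iic c) (ht : t ⊆ Ici c) (hst : μ s ≤ μ t)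
    (w : α) : μ (Ici w ∩ s) ≤ μ (Ici w ∩ t) := by
  by_cases hwc : w ≤ c
  · calc μ (Ici w ∩ s) ≤ μ s := measure_mono inter_subset_right
      _ ≤ μ t := hst
      _ = μ (Ici w ∩ t) := by rw [inter_eq_right.mpr (ht.trans (Ici_subset_Ici.mpr hwc))]
  · have : Ici w ∩ s = ∅ :=
      eq_empty_of_forall_notMem fun x hx => hwc ((mem_Ici.mp hx.1).trans (hs hx.2))
    simp [this]

lemma MeasureTheory.Measure.prod_setOf_fst_mem_and_snd_mem {α β : Type*} [MeasurableSpace α]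
    [MeasurableSpace β] (μ : Measure α) (ν : Measure β) [SFinite ν] {I : Set α}
    {J : α → Set β} (hI : MeasurableSet I)
    (hs : MeasurableSet {p : α × β | p.1 ∈ I ∧ p.2 ∈ J p.1}) :
    μ.prod ν {p | p.1 ∈ I ∧ p.2 ∈ J p.1} = ∫⁻ x in I, ν (J x) ∂μ := by
  rw [Measure.prod_apply hs, ← lintegral_indicator hI]
  congr with x
  by_cases hx : x ∈ I <;> simp [hx]

lemma setLIntegral_Ioc_ofReal_eq_intervalIntegral {f : ℝ → ℝ} {a b : ℝ} (hab : a ≤ b)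
    (hf : ContinuousOn f (Icc a b)) (hf₀ : ∀ x ∈ Ioc a b, 0 ≤ f x) :
    ∫⁻ x in Ioc a b, ENNReal.ofReal (f x) = ENNReal.ofReal (∫ x in a..b, f x) := by
  rw [intervalIntegral.integral_of_le hab, ofReal_integral_eq_lintegral_ofReal
    (hf.integrableOn_Icc.mono_set Ioc_subset_Icc_self)]
  filter_upwards [ae_restrict_mem measurableSet_Ioc] with x hx using hf₀ x hx

lemma volume_setOf_fst_mem_snd_mem {I : Set ℝ} {a b : ℝ} (hab : a ≤ b) (hI : MeasurableSet I)
    (hIab : I =ᵐ[volume] Ioc a b) {J : ℝ → Set ℝ} {g : ℝ → ℝ}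
    (hs : MeasurableSet {p : ℝ × ℝ | p.1 ∈ I ∧ p.2 ∈ J p.1})
    (hJ : ∀ x, volume (J x) = ENNReal.ofReal (g x)) (hg : ContinuousOn g (Icc a b))
    (hg₀ : ∀ x ∈ Ioc a b, 0 ≤ g x) :
    volume {p : ℝ × ℝ | p.1 ∈ I ∧ p.2 ∈ J p.1} = ENNReal.ofReal (∫ x in a..b, g x) := by
  rw [Measure.volume_eq_prod, Measure.prod_setOf_fst_mem_and_snd_mem _ _ hI hs]
  simp_rw [hJ]
  rw [setLIntegral_congr hIab, setLIntegral_Ioc_ofReal_eq_intervalIntegral hab hg hg₀]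

section AssocProd

variable {α β γ : Type*}

def assocProd (s : Set (α × β)) (t : Set γ) : Set (α × β × γ) :=
  {p | (p.1, p.2.1) ∈ s ∧ p.2.2 ∈ t}

lemma assocProd_eq_preimage [MeasurableSpace α] [MeasurableSpace β] [MeasurableSpace γ]
    (s : Set (α × β)) (t : Set γ) :
    assocProd s t = MeasurableEquiv.prodAssoc.symm ⁻¹' s ×ˢ t :=
  rfl

lemma assocProd_inter_assocProd (s u : Set (α × β)) (t v : Set γ) :
    assocProd s t ∩ assocProd u v = assocProd (s ∩ u) (t ∩ v) := by
  ext p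
  exact and_and_and_comm

lemma MeasurableSet.assocProd [MeasurableSpace α] [MeasurableSpace β] [MeasurableSpace γ]
    {s : Set (α × β)} {t : Set γ} (hs : MeasurableSet s) (ht : MeasurableSet t) :
    MeasurableSet (assocProd s t) :=
  MeasurableEquiv.prodAssoc.symm.measurable (hs.prod ht)

lemma volume_assocProd [MeasureSpace α] [MeasureSpace β] [MeasureSpace γ]
    [SFinite (volume : Measure β)] [SFinite (volume : Measure γ)]
    (s : Set (α × β)) (t : Set γ) :
    volume (assocProd s t) = volume s * volume t := by
  rw [assocProd_eq_preimage, volume_preserving_prodAssoc.symm.measure_preimage_equiv]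
  exact Measure.prod_prod s t

lemma restrict_assocProd_apply [MeasureSpace α] [MeasureSpace β] [MeasureSpace γ]
    [SFinite (volume : Measure β)] [SFinite (volume : Measure γ)]
    {s u : Set (α × β)} {t v : Set γ} (hs : MeasurableSet s) (ht : MeasurableSet t) :
    volume.restrict (assocProd s t) (assocProd u v) = volume (u ∩ s) * volume (v ∩ t) := by
  rw [Measure.restrict_apply' (hs.assocProd ht), assocProd_inter_assocProd, volume_assocProd]

end AssocProd

def triA : Set (ℝ × ℝ) := {q | 0 ≤ q.1 ∧ q.1 ≤ q.2 ∧ q.2 ≤ 1}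
def triB : Set (ℝ × ℝ) := {q | 0 ≤ q.2 ∧ q.2 < q.1 ∧ q.1 ≤ 1}
def triC : Set (ℝ × ℝ) := {q | 1 < q.1 ∧ q.1 ≤ q.2 ∧ q.2 ≤ 2}
def triD : Set (ℝ × ℝ) := {q | 1 < q.2 ∧ q.2 < q.1 ∧ q.1 ≤ 2}

lemma measurableSet_triA : MeasurableSet triA := by unfold triA; measurability
lemma measurableSet_triB : MeasurableSet triB := by unfold triB; measurability
lemma measurableSet_triC : MeasurableSet triC := by unfold triC; measurability
lemma measurableSet_triD : MeasurableSet triD := by unfold triD; measurability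

lemma volume_triA : volume triA = ENNReal.ofReal (1 / 2) := by
  have h : triA = {p | p.1 ∈ Icc 0 1 ∧ p.2 ∈ Icc p.1 1} := by
    ext ⟨x, y⟩; simp only [triA, mem_ofPred_eq, mem_Icc]; grind
  rw [h, volume_setOf_fst_mem_snd_mem zero_le_one measurableSet_Icc Ioc_ae_eq_Icc.symm
    (h ▸ measurableSet_triA) (fun _ => Real.volume_Icc) (by fun_prop)
    (fun _ hx => sub_nonneg.mpr hx.2)]
  norm_num [intervalIntegral.integral_comp_sub_left fun x => x]

lemma volume_triB : volume triB = ENNReal.ofReal (1 / 2) := by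
  have h : triB = {p | p.1 ∈ Ioc 0 1 ∧ p.2 ∈ Ico 0 p.1} := by
    ext ⟨x, y⟩; simp only [triB, mem_ofPred_eq, mem_Ioc, mem_Ico]; grind
  rw [h, volume_setOf_fst_mem_snd_mem zero_le_one measurableSet_Ioc .rfl
    (h ▸ measurableSet_triB) (fun _ => Real.volume_Ico) (by fun_prop)
    (fun _ hx => sub_nonneg.mpr hx.1.le)]
  norm_num

lemma volume_triC : volume triC = ENNReal.ofReal (1 / 2) := by
  have h : triC = {p | p.1 ∈ Ioc 1 2 ∧ p.2 ∈ Icc p.1 2} := by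
    ext ⟨x, y⟩; simp only [triC, mem_ofPred_eq, mem_Ioc, mem_Icc]; grind
  rw [h, volume_setOf_fst_mem_snd_mem one_le_two measurableSet_Ioc .rfl
    (h ▸ measurableSet_triC) (fun _ => Real.volume_Icc) (by fun_prop)
    (fun _ hx => sub_nonneg.mpr hx.2)]
  norm_num [intervalIntegral.integral_comp_sub_left fun x => x]

lemma volume_triD : volume triD = ENNReal.ofReal (1 / 2) := by
  have h : triD = {p | p.1 ∈ Ioc 1 2 ∧ p.2 ∈ Ioo 1 p.1} := by
    ext ⟨x, y⟩; simp only [triD, mem_ofPred_eq, mem_Ioc, mem_Ioo]; grind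
  rw [h, volume_setOf_fst_mem_snd_mem one_le_two measurableSet_Ioc .rfl
    (h ▸ measurableSet_triD) (fun _ => Real.volume_Ioo) (by fun_prop)
    (fun _ hx => sub_nonneg.mpr hx.1.le)]
  norm_num [intervalIntegral.integral_comp_sub_right fun x => x]

lemma volume_Ici_inter_triA_le (w : ℝ × ℝ) : volume (Ici w ∩ triA) ≤ volume (Ici w ∩ triD) :=
  measure_Ici_inter_le_measure_Ici_inter (c := (1, 1))
    (fun _ hq => Prod.le_def.mpr ⟨hq.2.1.trans hq.2.2, hq.2.2⟩)
    (fun _ hq => Prod.le_def.mpr ⟨(hq.1.trans hq.2.1).le, hq.1.le⟩)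
    (volume_triA.trans volume_triD.symm).le w

lemma volume_Ici_inter_triB_le (w : ℝ × ℝ) : volume (Ici w ∩ triB) ≤ volume (Ici w ∩ triC) :=
  measure_Ici_inter_le_measure_Ici_inter (c := (1, 1))
    (fun _ hq => Prod.le_def.mpr ⟨hq.2.2, hq.2.1.le.trans hq.2.2⟩)
    (fun _ hq => Prod.le_def.mpr ⟨hq.1.le, hq.1.le.trans hq.2.1⟩)
    (volume_triB.trans volume_triC.symm).le w

lemma ind_nonneg (P : Prop) : 0 ≤ ind P := by
  unfold ind; split_ifs <;> norm_num

lemma ofReal_ind_mul_ind (P Q : Prop) [Decidable (P ∧ Q)] :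
    ENNReal.ofReal (ind P * ind Q) = if P ∧ Q then 1 else 0 := by
  by_cases hP : P <;> by_cases hQ : Q <;> simp [ind, hP, hQ]

lemma ofReal_fdens :
    (fun p : ℝ × ℝ × ℝ × ℝ => ENNReal.ofReal (fdens p.1 p.2.1 p.2.2.1 p.2.2.2)) =
      (assocProd triA triC).indicator 1 + (assocProd triB triD).indicator 1 +
        (assocProd triC triA).indicator 1 + (assocProd triD triB).indicator 1 := by
  ext p
  simp (maxDischargeDepth := 4) only [fdens, ENNReal.ofReal_add, ind_nonneg, add_nonneg,
    mul_nonneg, ofReal_ind_mul_ind]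
  simp [indicator_apply, assocProd, triA, triB, triC, triD]

lemma ofReal_fstar :
    (fun p : ℝ × ℝ × ℝ × ℝ => ENNReal.ofReal (fstar p.1 p.2.1 p.2.2.1 p.2.2.2)) =
      (assocProd triA triB).indicator 1 + (assocProd triB triD).indicator 1 +
        (assocProd triC triA).indicator 1 + (assocProd triD triC).indicator 1 := by
  ext p
  simp (maxDischargeDepth := 4) only [fstar, ENNReal.ofReal_add, ind_nonneg, add_nonneg,
    mul_nonneg, ofReal_ind_mul_ind]
  simp [indicator_apply, assocProd, triA, triB, triC, triD]

lemma withDensity_four_indicator_one {α : Type*} [MeasurableSpace α] (μ : Measure α)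
    {s₁ s₂ s₃ s₄ : Set α} (h₁ : MeasurableSet s₁) (h₂ : MeasurableSet s₂) (h₃ : MeasurableSet s₃)
    (h₄ : MeasurableSet s₄) :
    μ.withDensity (s₁.indicator 1 + s₂.indicator 1 + s₃.indicator 1 + s₄.indicator 1) =
      μ.restrict s₁ + μ.restrict s₂ + μ.restrict s₃ + μ.restrict s₄ := by
  simp (maxDischargeDepth := 4) only [withDensity_add_left, Measurable.add,
    measurable_one.indicator, h₁, h₂, h₃, h₄, withDensity_indicator_one]

lemma measure_setOf_le_eq_map {Ω : Type*} [MeasurableSpace Ω] (μ : Measure Ω)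
    {X₁ X₂ Y₁ Y₂ : Ω → ℝ} (hV : Measurable fun ω => (X₁ ω, X₂ ω, Y₁ ω, Y₂ ω)) (z₁ z₂ z₃ z₄ : ℝ) :
    μ {ω | z₁ ≤ X₁ ω ∧ z₂ ≤ X₂ ω ∧ z₃ ≤ Y₁ ω ∧ z₄ ≤ Y₂ ω} =
      μ.map (fun ω => (X₁ ω, X₂ ω, Y₁ ω, Y₂ ω)) (assocProd (Ici (z₁, z₂)) (Ici (z₃, z₄))) := by
  rw [Measure.map_apply hV (measurableSet_Ici.assocProd measurableSet_Ici)]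
  congr 1
  ext ω
  simp [assocProd, and_assoc]

lemma withDensity_fdens_le_withDensity_fstar (w w' : ℝ × ℝ) :
    volume.withDensity (fun p : ℝ × ℝ × ℝ × ℝ => ENNReal.ofReal (fdens p.1 p.2.1 p.2.2.1 p.2.2.2))
        (assocProd (Ici w) (Ici w')) ≤
      volume.withDensity (fun p : ℝ × ℝ × ℝ × ℝ => ENNReal.ofReal (fstar p.1 p.2.1 p.2.2.1 p.2.2.2))
        (assocProd (Ici w) (Ici w')) := by
  have hA := measurableSet_triA
  have hB := measurableSet_triB
  have hC := measurableSet_triC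
  have hD := measurableSet_triD
  rw [ofReal_fdens, ofReal_fstar, withDensity_four_indicator_one _ (hA.assocProd hC)
      (hB.assocProd hD) (hC.assocProd hA) (hD.assocProd hB),
    withDensity_four_indicator_one _ (hA.assocProd hB) (hB.assocProd hD) (hC.assocProd hA)
      (hD.assocProd hC)]
  simp only [Measure.add_apply, restrict_assocProd_apply, hA, hB, hC, hD]
  set a := volume (Ici w ∩ triA)
  set d := volume (Ici w ∩ triD)
  set b := volume (Ici w' ∩ triB)
  set c := volume (Ici w' ∩ triC)
  set m₁ := volume (Ici w ∩ triB) * volume (Ici w' ∩ triD)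
  set m₂ := volume (Ici w ∩ triC) * volume (Ici w' ∩ triA)
  calc a * c + m₁ + m₂ + d * b = m₁ + m₂ + (a * c + d * b) := by ring
    _ ≤ m₁ + m₂ + (a * b + d * c) := add_le_add_right (mul_add_mul_le_mul_add_mul_of_canonical
      (volume_Ici_inter_triA_le w) (volume_Ici_inter_triB_le w')) _
    _ = a * b + m₁ + m₂ + d * c := by ring

theorem survival_le_survival_star_general {Ω : Type*} [MeasurableSpace Ω]
    (ℙ : Measure Ω)
    (X₁ X₂ Y₁ Y₂ Xs₁ Xs₂ Ys₁ Ys₂ : Ω → ℝ)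
    (hV : Measurable fun ω => (X₁ ω, X₂ ω, Y₁ ω, Y₂ ω))
    (hW : Measurable fun ω => (Xs₁ ω, Xs₂ ω, Ys₁ ω, Ys₂ ω))
    (hlaw : Measure.map (fun ω => (X₁ ω, X₂ ω, Y₁ ω, Y₂ ω)) ℙ =
      volume.withDensity (fun p : ℝ × ℝ × ℝ × ℝ =>
        ENNReal.ofReal (fdens p.1 p.2.1 p.2.2.1 p.2.2.2)))
    (hlaws : Measure.map (fun ω => (Xs₁ ω, Xs₂ ω, Ys₁ ω, Ys₂ ω)) ℙ =
      volume.withDensity (fun p : ℝ × ℝ × ℝ × ℝ =>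
        ENNReal.ofReal (fstar p.1 p.2.1 p.2.2.1 p.2.2.2))) :
    ∀ z₁ z₂ z₃ z₄ : ℝ,
      ℙ {ω | z₁ ≤ X₁ ω ∧ z₂ ≤ X₂ ω ∧ z₃ ≤ Y₁ ω ∧ z₄ ≤ Y₂ ω} ≤
        ℙ {ω | z₁ ≤ Xs₁ ω ∧ z₂ ≤ Xs₂ ω ∧ z₃ ≤ Ys₁ ω ∧ z₄ ≤ Ys₂ ω} := by
  intro z₁ z₂ z₃ z₄
  rw [measure_setOf_le_eq_map ℙ hV, measure_setOf_le_eq_map ℙ hW, hlaw, hlaws]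
  exact withDensity_fdens_le_withDensity_fstar (z₁, z₂) (z₃, z₄)

/-- The joint survival function of a vector with density `f` is pointwise dominated by that of
a vector with density `f*`. -/
theorem survival_le_survival_star {Ω : Type*} [MeasurableSpace Ω]
    (ℙ : Measure Ω) [IsProbabilityMeasure ℙ]
    (X₁ X₂ Y₁ Y₂ Xs₁ Xs₂ Ys₁ Ys₂ : Ω → ℝ)
    (hV : Measurable fun ω => (X₁ ω, X₂ ω, Y₁ ω, Y₂ ω))
    (hW : Measurable fun ω => (Xs₁ ω, Xs₂ ω, Ys₁ ω, Ys₂ ω))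
    (hlaw : Measure.map (fun ω => (X₁ ω, X₂ ω, Y₁ ω, Y₂ ω)) ℙ =
      volume.withDensity (fun p : ℝ × ℝ × ℝ × ℝ =>
        ENNReal.ofReal (fdens p.1 p.2.1 p.2.2.1 p.2.2.2)))
    (hlaws : Measure.map (fun ω => (Xs₁ ω, Xs₂ ω, Ys₁ ω, Ys₂ ω)) ℙ =
      volume.withDensity (fun p : ℝ × ℝ × ℝ × ℝ =>
        ENNReal.ofReal (fstar p.1 p.2.1 p.2.2.1 p.2.2.2))) :
    ∀ z₁ z₂ z₃ z₄ : ℝ,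
      ℙ {ω | z₁ ≤ X₁ ω ∧ z₂ ≤ X₂ ω ∧ z₃ ≤ Y₁ ω ∧ z₄ ≤ Y₂ ω} ≤
        ℙ {ω | z₁ ≤ Xs₁ ω ∧ z₂ ≤ Xs₂ ω ∧ z₃ ≤ Ys₁ ω ∧ z₄ ≤ Ys₂ ω} :=
  survival_le_survival_star_general ℙ X₁ X₂ Y₁ Y₂ Xs₁ Xs₂ Ys₁ Ys₂ hV hW hlaw hlaws
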